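/- Let M be an associative ℂ-algebra, E : M → ℂ a linear functional, and let W_n : M^n → Γ(M) be the multilinear maps determined by W() = 1 and the recursion W(a₁,…,a_{n+1}) = W(a₁,…,a_n)·X(a_{n+1}) − E(a_{n+1})·W(a₁,…,a_n) − Σ_{i=1}^n W(a₁,…,â_i,…,a_n, a_i a_{n+1}) − Σ_{i=1}^n E(a_i a_{n+1})·W(a₁,…,â_i,…,a_n), where â_i means a_i is omitted and the product a_i a_{n+1} is appended as the last argument. Then for all a₁,…,a_n ∈ M: X(a₁)X(a₂)⋯X(a_n) = Σ_{(π,S) ∈ IP(n)} (Π_{U ∈ π∖S} E(a_U)) · W(a_{V₁},…,a_{V_m}), where V₁,…,V_m are the open blocks of (π,S) listed in increasing order of their largest elements. -/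

import Mathlib

open Finset
open scoped Classical

noncomputable section

/-- A partition of `Fin n`, given by its (finite) set of blocks. -/
def IsPartition {n : ℕ} (P : Finset (Finset (Fin n))) : Prop :=
  (∀ B ∈ P, B.Nonempty) ∧ ∀ i : Fin n, ∃! B : Finset (Fin n), B ∈ P ∧ i ∈ B

/-- For `U = {i₁ < … < iₘ}`, the ordered product `a_{i₁} ⋯ a_{iₘ}`. -/
def aProd {M : Type*} [Ring M] {n : ℕ} (a : Fin n → M) (B : Finset (Fin n)) : M :=
  ((B.sort (· ≤ ·)).map a).prod

/-- The block of `P` containing `i`. -/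
def blockOf {n : ℕ} (P : Finset (Finset (Fin n))) (i : Fin n) : Finset (Fin n) :=
  Finset.univ.filter fun x => ∃ B ∈ P, i ∈ B ∧ x ∈ B

/-- The largest elements of the blocks of `T`, in increasing order; this lists the
blocks of `T` in increasing order of their largest elements. -/
def maxElts {n : ℕ} (T : Finset (Finset (Fin n))) : List (Fin n) :=
  (Finset.univ.filter fun i : Fin n => ∃ B ∈ T, i ∈ B ∧ ∀ x ∈ B, x ≤ i).sort (· ≤ ·)

/-!
Induct on `n`, multiplying the expansion of `X(a₁) ⋯ X(aₙ)` on the right by `X(aₙ₊₁)`.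
Every incomplete partition of `{1, …, n+1}` arises from exactly one of `{1, …, n}` by
either making `n+1` a singleton block or adding it to an open block `V`, and then declaring the
block of `n+1` open or closed. Since open blocks are listed by their largest elements, the block
of `n+1` is the last open block. The recursion writes `W(a_{V₁}, …, a_{Vₘ}) · X(aₙ₊₁)` as the sum
of `W(…, aₙ₊₁)`, `E(aₙ₊₁) W(…)`, and, for each `i`, `W(…, âᵢ, …, a_{Vᵢ} aₙ₊₁)` and
`E(a_{Vᵢ} aₙ₊₁) W(…, âᵢ, …)`; these are exactly the weights of the four kinds of extension.
-/

theorem List.ofFn_snoc {α : Type*} {k : ℕ} (f : Fin k → α) (x : α) :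
    List.ofFn (Fin.snoc f x : Fin (k + 1) → α) = List.ofFn f ++ [x] := by
  rw [List.ofFn_succ', List.concat_eq_append]
  simp only [Fin.snoc_castSucc, Fin.snoc_last]

theorem List.ofFn_removeNth {α : Type*} {k : ℕ} (p : Fin (k + 1)) (f : Fin (k + 1) → α) :
    List.ofFn (p.removeNth f) = (List.ofFn f).eraseIdx p := by
  refine List.ext_getElem (by rw [List.length_eraseIdx_of_lt (by simp [p.isLt])]; simp)
    fun j _ _ => ?_
  simp only [List.getElem_ofFn, List.getElem_eraseIdx, Fin.removeNth_apply]
  split_ifs with h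
  · rw [Fin.succAbove_of_castSucc_lt _ _ (by simpa [Fin.lt_def] using h)]; rfl
  · rw [Fin.succAbove_of_le_castSucc _ _ (by simpa [Fin.le_def] using h)]; rfl

theorem Finset.sort_insert_of_forall_le {α : Type*} [LinearOrder α] {s : Finset α} {a : α}
    (h : ∀ b ∈ s, b ≤ a) (ha : a ∉ s) :
    (insert a s).sort (· ≤ ·) = s.sort (· ≤ ·) ++ [a] := by
  refine List.Perm.eq_of_pairwise' (Finset.pairwise_sort _ _) ?_ ?_
  · rw [List.pairwise_append]
    exact ⟨Finset.pairwise_sort _ _, List.pairwise_singleton _ _,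
      fun b hb c hc => List.mem_singleton.1 hc ▸ h b ((Finset.mem_sort _).1 hb)⟩
  · refine (List.perm_ext_iff_of_nodup (Finset.sort_nodup _ _) ?_).2 fun b => ?_
    · exact (Finset.sort_nodup _ _).append (List.nodup_singleton a)
        (by simpa [Finset.mem_sort] using ha)
    · simp [Finset.mem_sort, or_comm]

-- `W` on the tuple listed by `l`: `Fin.snoc` and `Fin.removeNth` become `++ [x]` and
-- `List.eraseIdx`, and tuples of different lengths can be compared without casts.
def onList {M α : Type*} (W : (m : ℕ) → (Fin m → M) → α) (l : List M) : α :=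
  W l.length fun i => l[i]

theorem onList_ofFn {M α : Type*} (W : (m : ℕ) → (Fin m → M) → α) {k : ℕ}
    (v : Fin k → M) :
    onList W (List.ofFn v) = W k v := by
  unfold onList
  congr 1
  · simp
  · exact (Fin.heq_fun_iff (by simp)).2 fun i => by simp

structure IsWickFamily {M R A : Type*} [Mul M] [CommSemiring R] [Ring A] [Algebra R A]
    (E : M → R) (X : M → A) (W : (m : ℕ) → (Fin m → M) → A) : Prop where
  zero : ∀ a : Fin 0 → M, W 0 a = 1
  one : ∀ a : Fin 1 → M, W 1 a = W 0 (Fin.init a) * X (a 0) - E (a 0) • W 0 (Fin.init a)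
  succ_succ : ∀ (m : ℕ) (a : Fin (m + 2) → M),
    W (m + 2) a =
      W (m + 1) (Fin.init a) * X (a (Fin.last (m + 1)))
        - E (a (Fin.last (m + 1))) • W (m + 1) (Fin.init a)
        - ∑ i : Fin (m + 1),
            W (m + 1) (Fin.snoc (i.removeNth (Fin.init a)) (a i.castSucc * a (Fin.last (m + 1))))
        - ∑ i : Fin (m + 1),
            E (a i.castSucc * a (Fin.last (m + 1))) • W m (i.removeNth (Fin.init a))

namespace IsWickFamily

variable {M R A : Type*} [Mul M] [CommSemiring R] [Ring A] [Algebra R A]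
  {E : M → R} {X : M → A} {W : (m : ℕ) → (Fin m → M) → A}

theorem onList_nil (hW : IsWickFamily E X W) : onList W [] = 1 :=
  hW.zero _

theorem apply_zero_mul (hW : IsWickFamily E X W) (v : Fin 0 → M) (c : M) :
    W 0 v * X c = W 1 (Fin.snoc v c) + E c • W 0 v := by
  have hc : (Fin.snoc v c : Fin 1 → M) 0 = c := Fin.snoc_last (α := fun _ => M) c v
  rw [hW.one, Fin.init_snoc, hc, sub_add_cancel]

theorem apply_succ_mul (hW : IsWickFamily E X W) {k : ℕ} (v : Fin (k + 1) → M) (c : M) :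
    W (k + 1) v * X c
      = W (k + 2) (Fin.snoc v c) + E c • W (k + 1) v
        + ∑ i : Fin (k + 1), (W (k + 1) (Fin.snoc (i.removeNth v) (v i * c))
            + E (v i * c) • W k (i.removeNth v)) := by
  rw [hW.succ_succ]
  simp only [Fin.init_snoc, Fin.snoc_last, Fin.snoc_castSucc]
  rw [Finset.sum_add_distrib]
  abel

theorem onList_map_mul (hW : IsWickFamily E X W) {β : Type*} (L : List β) (g : β → M) (c : M) :
    onList W (L.map g) * X c
      = onList W (L.map g ++ [c]) + E c • onList W (L.map g)
        + ∑ i : Fin L.length, (onList W ((L.eraseIdx i).map g ++ [g L[i] * c])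
            + E (g L[i] * c) • onList W ((L.eraseIdx i).map g)) := by
  have hv : L.map g = List.ofFn fun i : Fin L.length => g L[i] :=
    (List.ofFn_getElem_eq_map L g).symm
  simp only [← List.eraseIdx_map, hv]
  cases L with
  | nil =>
    simp only [← List.ofFn_snoc, onList_ofFn]
    simpa using hW.apply_zero_mul _ c
  | cons x L =>
    simp only [← List.ofFn_removeNth, ← List.ofFn_snoc, onList_ofFn]
    exact hW.apply_succ_mul _ c

end IsWickFamily

-- For disjoint nonempty blocks this says `B.max' < C.max'`, without nonemptiness proofs.
def BlockLT {α : Type*} [Preorder α] (B C : Finset α) : Prop :=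
  ∃ y ∈ C, ∀ x ∈ B, x < y

instance {α : Type*} [Preorder α] : Std.Irrefl (BlockLT (α := α)) :=
  ⟨fun _ ⟨y, hy, h⟩ => lt_irrefl y (h y hy)⟩

instance {α : Type*} [Preorder α] : Std.Antisymm (BlockLT (α := α)) :=
  ⟨fun _ _ ⟨y, hy, h⟩ ⟨z, hz, h'⟩ => (lt_asymm (h z hz) (h' y hy)).elim⟩

namespace IncompletePartition

variable {n : ℕ}

structure IsBlockFamily (T : Finset (Finset (Fin n))) : Prop where
  nonempty : ∀ B ∈ T, B.Nonempty
  eq_of_mem : ∀ {B C : Finset (Fin n)} {i : Fin n},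
    B ∈ T → C ∈ T → i ∈ B → i ∈ C → B = C

theorem isPartition_iff {P : Finset (Finset (Fin n))} :
    IsPartition P ↔ IsBlockFamily P ∧ ∀ i, ∃ B ∈ P, i ∈ B := by
  constructor
  · rintro ⟨hne, huniq⟩
    exact ⟨⟨hne, fun hB hC hiB hiC => (huniq _).unique ⟨hB, hiB⟩ ⟨hC, hiC⟩⟩,
      fun i => (huniq i).exists⟩
  · rintro ⟨h, hcov⟩
    refine ⟨h.nonempty, fun i => ?_⟩
    obtain ⟨B, hB, hi⟩ := hcov i
    exact ⟨B, ⟨hB, hi⟩, fun C ⟨hC, hiC⟩ => h.eq_of_mem hC hB hiC hi⟩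

theorem _root_.IsPartition.isBlockFamily {P : Finset (Finset (Fin n))} (h : IsPartition P) :
    IsBlockFamily P :=
  (isPartition_iff.1 h).1

def maxSet (T : Finset (Finset (Fin n))) : Finset (Fin n) :=
  univ.filter fun i => ∃ B ∈ T, i ∈ B ∧ ∀ x ∈ B, x ≤ i

def sortedBlocks (T : Finset (Finset (Fin n))) : List (Finset (Fin n)) :=
  (maxElts T).map (blockOf T)

namespace IsBlockFamily

variable {T T' : Finset (Finset (Fin n))}

theorem mono (h : IsBlockFamily T) (hT : T' ⊆ T) : IsBlockFamily T' :=
  ⟨fun B hB => h.nonempty B (hT hB), fun hB hC => h.eq_of_mem (hT hB) (hT hC)⟩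

theorem empty_notMem (h : IsBlockFamily T) : ∅ ∉ T :=
  fun h' => Finset.not_nonempty_empty (h.nonempty ∅ h')

theorem blockOf_eq (h : IsBlockFamily T) {B : Finset (Fin n)} {i : Fin n} (hB : B ∈ T)
    (hi : i ∈ B) : blockOf T i = B := by
  ext x
  simp only [blockOf, mem_filter, mem_univ, true_and]
  exact ⟨fun ⟨C, hC, hiC, hxC⟩ => h.eq_of_mem hC hB hiC hi ▸ hxC,
    fun hx => ⟨B, hB, hi, hx⟩⟩

theorem blockOf_of_mem_maxSet (h : IsBlockFamily T) {v : Fin n} (hv : v ∈ maxSet T) :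
    blockOf T v ∈ T ∧ v ∈ blockOf T v ∧ ∀ x ∈ blockOf T v, x ≤ v := by
  obtain ⟨B, hB, hvB, hmax⟩ := (mem_filter.1 hv).2
  rw [h.blockOf_eq hB hvB]
  exact ⟨hB, hvB, hmax⟩

theorem mem_sortedBlocks (h : IsBlockFamily T) {B : Finset (Fin n)} :
    B ∈ sortedBlocks T ↔ B ∈ T := by
  simp only [sortedBlocks, maxElts, List.mem_map, mem_sort]
  constructor
  · rintro ⟨v, hv, rfl⟩
    exact (h.blockOf_of_mem_maxSet hv).1
  · intro hB
    have hne := h.nonempty B hB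
    refine ⟨B.max' hne, mem_filter.2 ⟨mem_univ _, B, hB, B.max'_mem hne,
      fun x hx => B.le_max' x hx⟩, h.blockOf_eq hB (B.max'_mem hne)⟩

theorem pairwise_sortedBlocks (h : IsBlockFamily T) : (sortedBlocks T).Pairwise BlockLT := by
  refine List.pairwise_map.2 ((Finset.sortedLT_sort (maxSet T)).pairwise.imp_of_mem ?_)
  intro v w hv hw hvw
  obtain ⟨-, -, hvmax⟩ := h.blockOf_of_mem_maxSet ((mem_sort _).1 hv)
  exact ⟨w, (h.blockOf_of_mem_maxSet ((mem_sort _).1 hw)).2.1,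
    fun x hx => (hvmax x hx).trans_lt hvw⟩

theorem nodup_sortedBlocks (h : IsBlockFamily T) : (sortedBlocks T).Nodup :=
  h.pairwise_sortedBlocks.nodup

theorem sortedBlocks_eq (h : IsBlockFamily T) {L : List (Finset (Fin n))}
    (hmem : ∀ B, B ∈ L ↔ B ∈ T) (hL : L.Pairwise BlockLT) : sortedBlocks T = L :=
  List.Perm.eq_of_pairwise' h.pairwise_sortedBlocks hL <|
    (List.perm_ext_iff_of_nodup h.nodup_sortedBlocks hL.nodup).2 fun B =>
      h.mem_sortedBlocks.trans (hmem B).symm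

theorem sum_eq_sum_sortedBlocks {β : Type*} [AddCommMonoid β] (h : IsBlockFamily T)
    (g : Finset (Fin n) → β) : ∑ B ∈ T, g B = ((sortedBlocks T).map g).sum := by
  rw [← List.sum_toFinset g h.nodup_sortedBlocks]
  congr 1
  ext B
  rw [List.mem_toFinset, h.mem_sortedBlocks]

theorem sortedBlocks_erase_getElem (h : IsBlockFamily T) (i : Fin (sortedBlocks T).length) :
    sortedBlocks (T.erase (sortedBlocks T)[i]) = (sortedBlocks T).eraseIdx i := by
  refine (h.mono (erase_subset _ _)).sortedBlocks_eq (fun B => ?_)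
    (h.pairwise_sortedBlocks.sublist (List.eraseIdx_sublist _ _))
  rw [← h.nodup_sortedBlocks.erase_getElem i i.isLt, h.nodup_sortedBlocks.mem_erase_iff,
    h.mem_sortedBlocks, mem_erase, Fin.getElem_fin]

theorem sum_sortedBlocks_erase {β : Type*} [AddCommMonoid β] (h : IsBlockFamily T)
    (F : List (Finset (Fin n)) → Finset (Fin n) → β) :
    ∑ B ∈ T, F (sortedBlocks (T.erase B)) B
      = ∑ i : Fin (sortedBlocks T).length,
          F ((sortedBlocks T).eraseIdx i) (sortedBlocks T)[i] := by
  rw [h.sum_eq_sum_sortedBlocks, ← List.ofFn_getElem_eq_map, List.sum_ofFn]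
  simp only [← h.sortedBlocks_erase_getElem, Fin.getElem_fin]

end IsBlockFamily

theorem _root_.IsPartition.blockOf_mem {P : Finset (Finset (Fin n))} (hP : IsPartition P)
    (i : Fin n) : blockOf P i ∈ P ∧ i ∈ blockOf P i := by
  obtain ⟨B, ⟨hB, hi⟩, -⟩ := hP.2 i
  rw [hP.isBlockFamily.blockOf_eq hB hi]
  exact ⟨hB, hi⟩

def up (V : Finset (Fin n)) : Finset (Fin (n + 1)) :=
  V.map Fin.castSuccEmb

def down (B : Finset (Fin (n + 1))) : Finset (Fin n) :=
  univ.filter fun i => i.castSucc ∈ B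

section UpDown

variable {V : Finset (Fin n)} {B : Finset (Fin (n + 1))}

theorem mem_up {x : Fin (n + 1)} : x ∈ up V ↔ ∃ j ∈ V, j.castSucc = x := by
  simp [up]

@[simp] theorem castSucc_mem_up {j : Fin n} : j.castSucc ∈ up V ↔ j ∈ V := by
  simp [up]

@[simp] theorem last_notMem_up : Fin.last n ∉ up V := by
  simp [up, Fin.castSucc_ne_last]

@[simp] theorem mem_down {i : Fin n} : i ∈ down B ↔ i.castSucc ∈ B := by
  simp [down]

@[simp] theorem down_up : down (up V) = V := by
  ext i; simp

theorem up_injective : Function.Injective (up (n := n)) :=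
  Finset.map_injective _

theorem up_nonempty (h : V.Nonempty) : (up V).Nonempty :=
  h.map

theorem up_down (h : Fin.last n ∉ B) : up (down B) = B := by
  ext x
  induction x using Fin.lastCases with
  | last => simp [h]
  | cast j => simp

theorem insert_last_up_down (h : Fin.last n ∈ B) : insert (Fin.last n) (up (down B)) = B := by
  ext x
  induction x using Fin.lastCases with
  | last => simp [h]
  | cast j => simp [Fin.castSucc_ne_last]

theorem blockLT_up {C : Finset (Fin n)} (h : BlockLT V C) : BlockLT (up V) (up C) := by
  obtain ⟨y, hy, hlt⟩ := h
  refine ⟨y.castSucc, castSucc_mem_up.2 hy, fun x hx => ?_⟩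
  obtain ⟨j, hj, rfl⟩ := mem_up.1 hx
  exact Fin.castSucc_lt_castSucc_iff.2 (hlt j hj)

variable {M : Type*} [Ring M]

theorem aProd_up (a : Fin (n + 1) → M) (V : Finset (Fin n)) :
    aProd a (up V) = aProd (Fin.init a) V := by
  rw [aProd, up, ← (Fin.strictMono_castSucc.strictMonoOn _).map_finsetSort, List.map_map]
  rfl

theorem aProd_insert_last_up (a : Fin (n + 1) → M) (V : Finset (Fin n)) :
    aProd a (insert (Fin.last n) (up V)) = aProd (Fin.init a) V * a (Fin.last n) := by
  rw [aProd, sort_insert_of_forall_le (fun b _ => Fin.le_last b) last_notMem_up,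
    List.map_append, List.prod_append, ← aProd, aProd_up]
  simp

end UpDown

namespace IsBlockFamily

variable {T : Finset (Finset (Fin n))}

theorem image_up (h : IsBlockFamily T) : IsBlockFamily (T.image up) := by
  refine ⟨?_, fun hB hC hiB hiC => ?_⟩
  · simp only [mem_image, forall_exists_index, and_imp, forall_apply_eq_imp_iff₂]
    exact fun B hB => up_nonempty (h.nonempty B hB)
  · obtain ⟨B', hB', rfl⟩ := mem_image.1 hB
    obtain ⟨C', hC', rfl⟩ := mem_image.1 hC
    obtain ⟨j, hj, rfl⟩ := mem_up.1 hiB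
    rw [h.eq_of_mem hB' hC' hj (castSucc_mem_up.1 hiC)]

theorem sortedBlocks_image_up (h : IsBlockFamily T) :
    sortedBlocks (T.image up) = (sortedBlocks T).map up := by
  refine h.image_up.sortedBlocks_eq (fun B => ?_)
    (List.pairwise_map.2 (h.pairwise_sortedBlocks.imp blockLT_up))
  simp [h.mem_sortedBlocks]

theorem sortedBlocks_insert_image_up (h : IsBlockFamily T) {N : Finset (Fin (n + 1))}
    (hN : Fin.last n ∈ N) (h' : IsBlockFamily (insert N (T.image up))) :
    sortedBlocks (insert N (T.image up)) = (sortedBlocks T).map up ++ [N] := by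
  refine h'.sortedBlocks_eq (fun B => ?_) (List.pairwise_append.2
    ⟨List.pairwise_map.2 (h.pairwise_sortedBlocks.imp blockLT_up), List.pairwise_singleton _ _,
      fun B hB C hC => ?_⟩)
  · simp [h.mem_sortedBlocks, or_comm]
  · rw [List.mem_singleton.1 hC]
    obtain ⟨B', -, rfl⟩ := List.mem_map.1 hB
    refine ⟨Fin.last n, hN, fun x hx => ?_⟩
    obtain ⟨j, -, rfl⟩ := mem_up.1 hx
    exact Fin.castSucc_lt_last j

end IsBlockFamily

-- `o = none`: `n+1` becomes a singleton block; `o = some V`: it joins the block `V`.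
-- In `extendOpen`, `b` says whether the block of `n+1` is open.
def newBlock (o : Option (Finset (Fin n))) : Finset (Fin (n + 1)) :=
  insert (Fin.last n) (up (o.getD ∅))

def extend (T : Finset (Finset (Fin n))) (o : Option (Finset (Fin n))) :
    Finset (Finset (Fin (n + 1))) :=
  insert (newBlock o) ((T \ o.toFinset).image up)

def extendOpen (S : Finset (Finset (Fin n))) (b : Bool) (o : Option (Finset (Fin n))) :
    Finset (Finset (Fin (n + 1))) :=
  if b then extend S o else (S \ o.toFinset).image up

theorem last_mem_newBlock (o : Option (Finset (Fin n))) : Fin.last n ∈ newBlock o :=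
  mem_insert_self _ _

theorem newBlock_notMem_image_up (T : Finset (Finset (Fin n))) (o : Option (Finset (Fin n))) :
    newBlock o ∉ T.image up := by
  simp only [mem_image, not_exists, not_and]
  exact fun C _ hC => last_notMem_up (hC ▸ last_mem_newBlock o)

@[simp] theorem down_newBlock (o : Option (Finset (Fin n))) : down (newBlock o) = o.getD ∅ := by
  ext i; simp [newBlock, Fin.castSucc_ne_last]

theorem IsBlockFamily.insert_newBlock {T : Finset (Finset (Fin n))} (h : IsBlockFamily T)
    {o : Option (Finset (Fin n))} (ho : ∀ C ∈ T, ∀ j ∈ o.getD ∅, j ∉ C) :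
    IsBlockFamily (insert (newBlock o) (T.image up)) := by
  have hup := h.image_up
  have hdisj : ∀ C ∈ T.image up, ∀ {x}, x ∈ newBlock o → x ∉ C := by
    rintro _ hC x hx hxC
    obtain ⟨C', hC', rfl⟩ := mem_image.1 hC
    obtain ⟨j, hj, rfl⟩ := mem_up.1 hxC
    rcases mem_insert.1 hx with hx | hx
    · exact Fin.castSucc_ne_last j hx
    · exact ho C' hC' j (castSucc_mem_up.1 hx) hj
  refine ⟨fun B hB => ?_, fun hB hC hiB hiC => ?_⟩
  · rcases mem_insert.1 hB with rfl | hB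
    · exact ⟨_, last_mem_newBlock o⟩
    · exact hup.nonempty B hB
  · rcases mem_insert.1 hB with rfl | hB <;> rcases mem_insert.1 hC with rfl | hC
    · rfl
    · exact (hdisj _ hC hiB hiC).elim
    · exact (hdisj _ hB hiC hiB).elim
    · exact hup.eq_of_mem hB hC hiB hiC

theorem _root_.IsPartition.extend {π : Finset (Finset (Fin n))} (hπ : IsPartition π)
    {o : Option (Finset (Fin n))} (ho : ∀ V ∈ o, V ∈ π) : IsPartition (extend π o) := by
  obtain ⟨h, hcov⟩ := isPartition_iff.1 hπ
  refine isPartition_iff.2 ⟨(h.mono sdiff_subset).insert_newBlock fun C hC j hj hjC => ?_,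
    fun i => ?_⟩
  · rcases o with _ | V
    · simp at hj
    · have hCV := h.eq_of_mem (ho V rfl) (mem_sdiff.1 hC).1 hj hjC
      simp [← hCV] at hC
  · induction i using Fin.lastCases with
    | last => exact ⟨_, mem_insert_self _ _, last_mem_newBlock o⟩
    | cast j =>
      obtain ⟨C, hC, hjC⟩ := hcov j
      by_cases hCo : C ∈ o.toFinset
      · refine ⟨newBlock o, mem_insert_self _ _, mem_insert_of_mem (castSucc_mem_up.2 ?_)⟩
        rcases o with _ | V
        · simp at hCo
        · obtain rfl : C = V := by simpa using hCo
          exact hjC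
      · exact ⟨up C, mem_insert_of_mem (mem_image_of_mem _ (mem_sdiff.2 ⟨hC, hCo⟩)),
          castSucc_mem_up.2 hjC⟩

theorem extendOpen_subset_extend {π S : Finset (Finset (Fin n))} (hS : S ⊆ π) (b : Bool)
    (o : Option (Finset (Fin n))) : extendOpen S b o ⊆ extend π o := by
  have himg : (S \ o.toFinset).image up ⊆ (π \ o.toFinset).image up :=
    image_subset_image (sdiff_subset_sdiff hS le_rfl)
  cases b
  · exact himg.trans (subset_insert _ _)
  · exact insert_subset_insert _ himg

def restrict (T : Finset (Finset (Fin (n + 1)))) : Finset (Finset (Fin n)) :=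
  (T.image down).erase ∅

def lastBlock (P : Finset (Finset (Fin (n + 1)))) : Finset (Fin (n + 1)) :=
  blockOf P (Fin.last n)

def someIfNonempty {α : Type*} (s : Finset α) : Option (Finset α) :=
  if s = ∅ then none else some s

@[simp] theorem getD_someIfNonempty {α : Type*} (s : Finset α) :
    (someIfNonempty s).getD ∅ = s := by
  rcases eq_or_ne s ∅ with rfl | h <;> simp [someIfNonempty, *]

theorem mem_someIfNonempty {α : Type*} {s t : Finset α} :
    t ∈ someIfNonempty s ↔ s ≠ ∅ ∧ s = t := by
  rcases eq_or_ne s ∅ with rfl | h <;> simp [someIfNonempty, *]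

theorem someIfNonempty_getD {o : Option (Finset (Fin n))} (ho : ∀ V ∈ o, V.Nonempty) :
    someIfNonempty (o.getD ∅) = o := by
  rcases o with _ | V
  · simp [someIfNonempty]
  · simp [someIfNonempty, (ho V rfl).ne_empty]

theorem restrict_extend {T : Finset (Finset (Fin n))} (hT : ∅ ∉ T)
    {o : Option (Finset (Fin n))} (ho : ∀ V ∈ o, V ∈ T) : restrict (extend T o) = T := by
  have hdu : ((T \ o.toFinset).image up).image down = T \ o.toFinset := by
    rw [image_image, show down ∘ up = id from funext fun _ => down_up, image_id]
  rw [restrict, extend, image_insert, down_newBlock, hdu]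
  rcases o with _ | V
  · simp [erase_eq_of_notMem hT]
  · rw [Option.getD_some, Option.toFinset_some, sdiff_singleton_eq_erase,
      insert_erase (ho V rfl), erase_eq_of_notMem hT]

theorem restrict_mono {T T' : Finset (Finset (Fin (n + 1)))} (h : T ⊆ T') :
    restrict T ⊆ restrict T' :=
  erase_subset_erase _ (image_subset_image h)

section Restrict

variable {P : Finset (Finset (Fin (n + 1)))}

theorem _root_.IsPartition.lastBlock_mem (hP : IsPartition P) : lastBlock P ∈ P :=
  (hP.blockOf_mem _).1

theorem _root_.IsPartition.last_mem_lastBlock (hP : IsPartition P) :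
    Fin.last n ∈ lastBlock P :=
  (hP.blockOf_mem _).2

theorem _root_.IsPartition.last_notMem_of_ne_lastBlock (hP : IsPartition P)
    {C : Finset (Fin (n + 1))} (hC : C ∈ P) (hne : C ≠ lastBlock P) : Fin.last n ∉ C :=
  fun hL => hne (hP.isBlockFamily.eq_of_mem hC hP.lastBlock_mem hL hP.last_mem_lastBlock)

theorem _root_.IsPartition.restrict (hP : IsPartition P) : IsPartition (restrict P) := by
  refine isPartition_iff.2 ⟨⟨fun U hU => nonempty_iff_ne_empty.2 (mem_erase.1 hU).1,
    fun hU hU' hiU hiU' => ?_⟩, fun i => ?_⟩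
  · obtain ⟨C, hC, rfl⟩ := mem_image.1 (mem_erase.1 hU).2
    obtain ⟨C', hC', rfl⟩ := mem_image.1 (mem_erase.1 hU').2
    rw [hP.isBlockFamily.eq_of_mem hC hC' (mem_down.1 hiU) (mem_down.1 hiU')]
  · obtain ⟨hC, hiC⟩ := hP.blockOf_mem i.castSucc
    exact ⟨down (blockOf P i.castSucc),
      mem_erase.2 ⟨ne_empty_of_mem (mem_down.2 hiC), mem_image_of_mem _ hC⟩, mem_down.2 hiC⟩

theorem _root_.IsPartition.restrict_sdiff (hP : IsPartition P)
    {Y : Finset (Finset (Fin (n + 1)))} (hY : Y ⊆ P) :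
    restrict Y \ (someIfNonempty (down (lastBlock P))).toFinset
      = (Y.erase (lastBlock P)).image down := by
  ext U
  simp only [restrict, mem_sdiff, mem_erase, mem_image, Option.mem_toFinset, mem_someIfNonempty]
  constructor
  · rintro ⟨⟨hU, C, hC, rfl⟩, hUo⟩
    exact ⟨C, ⟨fun hCB => hUo ⟨hCB ▸ hU, hCB ▸ rfl⟩, hC⟩, rfl⟩
  · rintro ⟨C, ⟨hCB, hC⟩, rfl⟩
    have hL := hP.last_notMem_of_ne_lastBlock (hY hC) hCB
    obtain ⟨j, hj⟩ : (down C).Nonempty := by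
      obtain ⟨x, hx⟩ := hP.1 C (hY hC)
      rw [← up_down hL] at hx
      obtain ⟨j, hj, -⟩ := mem_up.1 hx
      exact ⟨j, hj⟩
    refine ⟨⟨ne_empty_of_mem hj, C, hC, rfl⟩, fun ⟨_, hBC⟩ => hCB ?_⟩
    exact hP.isBlockFamily.eq_of_mem (hY hC) hP.lastBlock_mem (mem_down.1 hj)
      (mem_down.1 (hBC ▸ hj))

theorem _root_.IsPartition.newBlock_someIfNonempty (hP : IsPartition P) :
    newBlock (someIfNonempty (down (lastBlock P))) = lastBlock P := by
  rw [newBlock, getD_someIfNonempty, insert_last_up_down hP.last_mem_lastBlock]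

theorem _root_.IsPartition.image_up_restrict_sdiff (hP : IsPartition P)
    {Y : Finset (Finset (Fin (n + 1)))} (hY : Y ⊆ P) :
    (restrict Y \ (someIfNonempty (down (lastBlock P))).toFinset).image up
      = Y.erase (lastBlock P) := by
  rw [hP.restrict_sdiff hY, image_image]
  refine (image_congr fun C hC => ?_).trans image_id
  exact up_down (hP.last_notMem_of_ne_lastBlock (hY (mem_erase.1 hC).2) (mem_erase.1 hC).1)

theorem _root_.IsPartition.extend_restrict (hP : IsPartition P)
    {Y : Finset (Finset (Fin (n + 1)))} (hY : Y ⊆ P) (hB : lastBlock P ∈ Y) :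
    extend (restrict Y) (someIfNonempty (down (lastBlock P))) = Y := by
  rw [extend, hP.image_up_restrict_sdiff hY, hP.newBlock_someIfNonempty, insert_erase hB]

end Restrict

theorem lastBlock_extend {π : Finset (Finset (Fin n))} {o : Option (Finset (Fin n))}
    (h : IsBlockFamily (extend π o)) : lastBlock (extend π o) = newBlock o :=
  h.blockOf_eq (mem_insert_self _ _) (last_mem_newBlock o)

theorem insert_newBlock_extendOpen (S : Finset (Finset (Fin n))) (b : Bool)
    (o : Option (Finset (Fin n))) : insert (newBlock o) (extendOpen S b o) = extend S o := by
  cases b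
  · rfl
  · exact insert_idem _ _

theorem newBlock_mem_extendOpen_iff {S : Finset (Finset (Fin n))} {b : Bool}
    {o : Option (Finset (Fin n))} : newBlock o ∈ extendOpen S b o ↔ b = true := by
  cases b
  · simp only [extendOpen, Bool.false_eq_true, if_false, iff_false]
    exact newBlock_notMem_image_up _ o
  · simp [extendOpen, extend]

def ipPairs (n : ℕ) : Finset (Finset (Finset (Fin n)) × Finset (Finset (Fin n))) :=
  univ.filter fun q => IsPartition q.1 ∧ q.2 ⊆ q.1

theorem mem_ipPairs {q : Finset (Finset (Fin n)) × Finset (Finset (Fin n))} :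
    q ∈ ipPairs n ↔ IsPartition q.1 ∧ q.2 ⊆ q.1 := by
  simp [ipPairs]

-- The inverse of `(π, S, b, o) ↦ (extend π o, extendOpen S b o)`.
def restrictPair (q : Finset (Finset (Fin (n + 1))) × Finset (Finset (Fin (n + 1)))) :
    Σ _ : Finset (Finset (Fin n)) × Finset (Finset (Fin n)), Bool × Option (Finset (Fin n)) :=
  ⟨(restrict q.1, restrict (insert (lastBlock q.1) q.2)),
    (decide (lastBlock q.1 ∈ q.2), someIfNonempty (down (lastBlock q.1)))⟩

theorem restrictPair_extend {π S : Finset (Finset (Fin n))} (hπ : IsPartition π) (hS : S ⊆ π)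
    (b : Bool) {o : Option (Finset (Fin n))} (ho : ∀ V ∈ o, V ∈ S) :
    restrictPair (extend π o, extendOpen S b o) = ⟨(π, S), (b, o)⟩ := by
  have hfam := (hπ.extend fun V hV => hS (ho V hV)).isBlockFamily
  have hempty := hπ.isBlockFamily.empty_notMem
  simp only [restrictPair, lastBlock_extend hfam, insert_newBlock_extendOpen,
    restrict_extend hempty fun V hV => hS (ho V hV),
    restrict_extend (fun h => hempty (hS h)) ho, newBlock_mem_extendOpen_iff, down_newBlock,
    someIfNonempty_getD fun V hV => hπ.isBlockFamily.nonempty V (hS (ho V hV)),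
    Bool.decide_eq_true]

theorem extend_restrictPair {q : Finset (Finset (Fin (n + 1))) × Finset (Finset (Fin (n + 1)))}
    (hq : q ∈ ipPairs (n + 1)) :
    (extend (restrictPair q).1.1 (restrictPair q).2.2,
      extendOpen (restrictPair q).1.2 (restrictPair q).2.1 (restrictPair q).2.2) = q := by
  obtain ⟨hP, hS⟩ := mem_ipPairs.1 hq
  have hB := hP.lastBlock_mem
  refine Prod.ext (hP.extend_restrict subset_rfl hB) ?_
  by_cases hBS : lastBlock q.1 ∈ q.2
  · simpa [restrictPair, extendOpen, hBS, insert_eq_of_mem hBS] using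
      hP.extend_restrict (insert_subset hB hS) (mem_insert_self _ _)
  · simpa [restrictPair, extendOpen, hBS, erase_insert hBS] using
      hP.image_up_restrict_sdiff (insert_subset hB hS)

theorem sum_ipPairs_succ {β : Type*} [AddCommMonoid β]
    (f : Finset (Finset (Fin (n + 1))) × Finset (Finset (Fin (n + 1))) → β) :
    ∑ q ∈ ipPairs (n + 1), f q
      = ∑ p ∈ ipPairs n, ∑ b : Bool, ∑ o ∈ insertNone p.2,
          f (extend p.1 o, extendOpen p.2 b o) := by
  have hsigma : ∑ p ∈ ipPairs n, ∑ b : Bool, ∑ o ∈ insertNone p.2,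
        f (extend p.1 o, extendOpen p.2 b o)
      = ∑ x ∈ (ipPairs n).sigma fun p => univ ×ˢ insertNone p.2,
          f (extend x.1.1 x.2.2, extendOpen x.1.2 x.2.1 x.2.2) := by
    simp only [sum_sigma, sum_product]
  rw [hsigma]
  refine sum_nbij' restrictPair (fun x => (extend x.1.1 x.2.2, extendOpen x.1.2 x.2.1 x.2.2))
    (fun q hq => ?_) (fun x hx => ?_) (fun q hq => extend_restrictPair hq) (fun x hx => ?_)
    (fun q hq => by rw [extend_restrictPair hq])
  · obtain ⟨hP, hS⟩ := mem_ipPairs.1 hq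
    simp only [mem_sigma, mem_ipPairs, mem_product, mem_univ, true_and, mem_insertNone]
    refine ⟨⟨hP.restrict, restrict_mono (insert_subset hP.lastBlock_mem hS)⟩,
      fun V hV => ?_⟩
    obtain ⟨hne, rfl⟩ := mem_someIfNonempty.1 hV
    exact mem_erase.2 ⟨hne, mem_image_of_mem _ (mem_insert_self _ _)⟩
  · simp only [mem_sigma, mem_ipPairs, mem_product, mem_univ, true_and, mem_insertNone] at hx ⊢
    obtain ⟨⟨hπ, hS⟩, ho⟩ := hx
    exact ⟨hπ.extend fun V hV => hS (ho V hV), extendOpen_subset_extend hS _ _⟩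
  · simp only [mem_sigma, mem_ipPairs, mem_product, mem_univ, true_and, mem_insertNone] at hx
    exact restrictPair_extend hx.1.1 hx.1.2 _ hx.2

section Weight

variable {π S : Finset (Finset (Fin n))} {o : Option (Finset (Fin n))}

theorem extend_sdiff_extendOpen_true (ho : ∀ V ∈ o, V ∈ S) :
    extend π o \ extendOpen S true o = (π \ S).image up := by
  rw [extendOpen, if_pos rfl, extend, extend, insert_sdiff_insert,
    sdiff_insert_of_notMem (newBlock_notMem_image_up _ o), ← image_sdiff _ _ up_injective,
    sdiff_sdiff_sdiff_cancel_right fun V hV => ho V (Option.mem_toFinset.1 hV)]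

theorem extend_sdiff_extendOpen_false (ho : ∀ V ∈ o, V ∈ S) :
    extend π o \ extendOpen S false o = insert (newBlock o) ((π \ S).image up) := by
  rw [extendOpen, if_neg Bool.false_ne_true, extend,
    insert_sdiff_of_notMem _ (newBlock_notMem_image_up _ o), ← image_sdiff _ _ up_injective,
    sdiff_sdiff_sdiff_cancel_right fun V hV => ho V (Option.mem_toFinset.1 hV)]

theorem sortedBlocks_extendOpen_false (hS : IsBlockFamily S) :
    sortedBlocks (extendOpen S false o) = (sortedBlocks (S \ o.toFinset)).map up :=
  (hS.mono sdiff_subset).sortedBlocks_image_up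

theorem sortedBlocks_extendOpen_true (hS : IsBlockFamily S)
    (h : IsBlockFamily (extendOpen S true o)) :
    sortedBlocks (extendOpen S true o)
      = (sortedBlocks (S \ o.toFinset)).map up ++ [newBlock o] :=
  (hS.mono sdiff_subset).sortedBlocks_insert_image_up (last_mem_newBlock o) h

variable {M R A : Type*} [Ring M] [CommSemiring R] [Ring A] [Algebra R A]

theorem prod_image_up (E : M → R) (a : Fin (n + 1) → M) (T : Finset (Finset (Fin n))) :
    ∏ U ∈ T.image up, E (aProd a U) = ∏ U ∈ T, E (aProd (Fin.init a) U) := by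
  rw [prod_image up_injective.injOn]
  simp only [aProd_up]

theorem map_up_map_aProd (a : Fin (n + 1) → M) (L : List (Finset (Fin n))) :
    (L.map up).map (aProd a) = L.map (aProd (Fin.init a)) := by
  simp [Function.comp_def, aProd_up]

def weight (E : M → R) (W : (m : ℕ) → (Fin m → M) → A) {n : ℕ} (a : Fin n → M)
    (π S : Finset (Finset (Fin n))) : A :=
  (∏ U ∈ π \ S, E (aProd a U)) • onList W ((sortedBlocks S).map (aProd a))

variable (E : M → R) (W : (m : ℕ) → (Fin m → M) → A)

theorem weight_extend_false (hπ : IsPartition π) (hS : S ⊆ π) (ho : ∀ V ∈ o, V ∈ S)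
    (a : Fin (n + 1) → M) :
    weight E W a (extend π o) (extendOpen S false o)
      = (E (aProd a (newBlock o)) * ∏ U ∈ π \ S, E (aProd (Fin.init a) U))
          • onList W ((sortedBlocks (S \ o.toFinset)).map (aProd (Fin.init a))) := by
  rw [weight, extend_sdiff_extendOpen_false ho,
    prod_insert (newBlock_notMem_image_up _ o), prod_image_up,
    sortedBlocks_extendOpen_false (hπ.isBlockFamily.mono hS), map_up_map_aProd]

theorem weight_extend_true (hπ : IsPartition π) (hS : S ⊆ π) (ho : ∀ V ∈ o, V ∈ S)
    (a : Fin (n + 1) → M) :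
    weight E W a (extend π o) (extendOpen S true o)
      = (∏ U ∈ π \ S, E (aProd (Fin.init a) U))
          • onList W ((sortedBlocks (S \ o.toFinset)).map (aProd (Fin.init a))
              ++ [aProd a (newBlock o)]) := by
  have hfam : IsBlockFamily (extendOpen S true o) :=
    (hπ.extend fun V hV => hS (ho V hV)).isBlockFamily.mono (extendOpen_subset_extend hS _ _)
  rw [weight, extend_sdiff_extendOpen_true ho, prod_image_up,
    sortedBlocks_extendOpen_true (hπ.isBlockFamily.mono hS) hfam, List.map_append,
    map_up_map_aProd, List.map_singleton]

theorem aProd_empty {k : ℕ} (a : Fin k → M) : aProd a ∅ = 1 := by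
  simp [aProd]

theorem _root_.IsWickFamily.weight_mul {X : M → A} (hW : IsWickFamily E X W)
    (hπ : IsPartition π) (hS : S ⊆ π) (a : Fin (n + 1) → M) :
    weight E W (Fin.init a) π S * X (a (Fin.last n))
      = ∑ b : Bool, ∑ o ∈ insertNone S, weight E W a (extend π o) (extendOpen S b o) := by
  set g := aProd (Fin.init a)
  set c := a (Fin.last n)
  set C := ∏ U ∈ π \ S, E (g U)
  have hpair : ∀ o ∈ insertNone S, ∑ b : Bool, weight E W a (extend π o) (extendOpen S b o)
      = C • (onList W ((sortedBlocks (S \ o.toFinset)).map g ++ [g (o.getD ∅) * c])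
          + E (g (o.getD ∅) * c) • onList W ((sortedBlocks (S \ o.toFinset)).map g)) := by
    intro o ho
    rw [Fintype.sum_bool, weight_extend_true E W hπ hS (mem_insertNone.1 ho),
      weight_extend_false E W hπ hS (mem_insertNone.1 ho), newBlock, aProd_insert_last_up,
      mul_comm, mul_smul, smul_add]
  have hSfam := hπ.isBlockFamily.mono hS
  rw [sum_comm, sum_congr rfl hpair, sum_insertNone, weight, smul_mul_assoc,
    hW.onList_map_mul, ← hSfam.sum_sortedBlocks_erase fun L V =>
      onList W (L.map g ++ [g V * c]) + E (g V * c) • onList W (L.map g)]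
  simp only [Option.getD_none, Option.toFinset_none, sdiff_empty, Option.getD_some,
    Option.toFinset_some, sdiff_singleton_eq_erase, smul_add, smul_sum]
  rw [show g ∅ = 1 from aProd_empty _, one_mul]

theorem ipPairs_zero : ipPairs 0 = {(∅, ∅)} := by
  ext ⟨π, S⟩
  simp only [mem_ipPairs, mem_singleton, Prod.mk.injEq]
  constructor
  · rintro ⟨hπ, hS⟩
    obtain rfl : π = ∅ := eq_empty_of_forall_notMem fun B hB => by
      obtain ⟨x, -⟩ := hπ.1 B hB
      exact x.elim0
    exact ⟨rfl, subset_empty.1 hS⟩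
  · rintro ⟨rfl, rfl⟩
    exact ⟨⟨by simp, fun i => i.elim0⟩, subset_rfl⟩

theorem _root_.IsWickFamily.prod_ofFn_eq_sum_weight {X : M → A} (hW : IsWickFamily E X W)
    (n : ℕ) (a : Fin n → M) :
    (List.ofFn fun i => X (a i)).prod = ∑ q ∈ ipPairs n, weight E W a q.1 q.2 := by
  induction n with
  | zero => simp [ipPairs_zero, weight, sortedBlocks, maxElts, hW.onList_nil]
  | succ n ih =>
    rw [List.ofFn_succ', List.prod_concat, sum_ipPairs_succ]
    simp only [← Fin.init_def, ih, sum_mul]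
    exact sum_congr rfl fun q hq => hW.weight_mul E W (mem_ipPairs.1 hq).1 (mem_ipPairs.1 hq).2 a

end Weight

theorem onList_map_aProd_sortedBlocks {M α : Type*} [Ring M]
    (W : (m : ℕ) → (Fin m → M) → α) {k : ℕ} (a : Fin k → M)
    (S : Finset (Finset (Fin k))) :
    onList W ((sortedBlocks S).map (aProd a))
      = W (maxElts S).length fun j => aProd a (blockOf S ((maxElts S).get j)) := by
  rw [← onList_ofFn W, sortedBlocks, List.map_map, ← List.ofFn_getElem_eq_map]
  rfl

end IncompletePartition

theorem stmt10 {M : Type*} [Ring M] [Algebra ℂ M] (E : M →ₗ[ℂ] ℂ)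
    (W : (m : ℕ) → (Fin m → M) → TensorAlgebra ℂ M)
    (hW0 : ∀ a : Fin 0 → M, W 0 a = 1)
    (hW1 : ∀ a : Fin 1 → M,
      W 1 a = W 0 (Fin.init a) * TensorAlgebra.ι ℂ (a 0)
        - E (a 0) • W 0 (Fin.init a))
    (hWrec : ∀ (m : ℕ) (a : Fin (m + 2) → M),
      W (m + 2) a =
        W (m + 1) (Fin.init a) * TensorAlgebra.ι ℂ (a (Fin.last (m + 1)))
          - E (a (Fin.last (m + 1))) • W (m + 1) (Fin.init a)
          - ∑ i : Fin (m + 1),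
              W (m + 1) (Fin.snoc (i.removeNth (Fin.init a))
                (a i.castSucc * a (Fin.last (m + 1))))
          - ∑ i : Fin (m + 1),
              E (a i.castSucc * a (Fin.last (m + 1))) • W m (i.removeNth (Fin.init a)))
    (n : ℕ) (a : Fin n → M) :
    (List.ofFn fun i => TensorAlgebra.ι ℂ (a i)).prod
      = ∑ π ∈ Finset.univ.filter (fun π : Finset (Finset (Fin n)) => IsPartition π),
          ∑ S ∈ π.powerset,
            (∏ U ∈ π \ S, E (aProd a U)) •
              W (maxElts S).length (fun j => aProd a (blockOf S ((maxElts S).get j))) := by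
  have hW : IsWickFamily E (TensorAlgebra.ι ℂ) W := ⟨hW0, hW1, hWrec⟩
  rw [hW.prod_ofFn_eq_sum_weight, sum_finset_product (IncompletePartition.ipPairs n)
    (univ.filter fun π => IsPartition π) powerset fun q => by
      simp [IncompletePartition.mem_ipPairs]]
  simp only [IncompletePartition.weight, IncompletePartition.onList_map_aProd_sortedBlocks]
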